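/- Fix g ∈ B_L with 0 < ε < 1/(L(N+1+K)). If β₁, β₂ ∈ ℝ and g, h ∈ B_L satisfy η = β₁ + ε(Σᵢ (g(β₁))ᵢ q_{2i}(β₁) − T_c) = β₂ + ε(Σᵢ (h(β₂))ᵢ q_{2i}(β₂) − T_c) for some η ∈ ℝ, then |β₁ − β₂| ≤ ε(N+1)/(1 − εL(N+1+K)) · ‖g − h‖_∞. -/

import Mathlib

/-!
Writing `F_g β = ∑ i, g β i * q i β`, the hypothesis says `β₁ - β₂ = ε (F_h β₂ - F_g β₁)`.
Split `F_h β₂ - F_g β₁ = (F_h β₂ - F_g β₂) + (F_g β₂ - F_g β₁)`: the first term is at most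
`(N + 1) ‖g - h‖_∞` since `|q i| ≤ 1`, and the second at most `L (N + 1 + K) |β₁ - β₂|` since `F_g`
is a sum of products of bounded Lipschitz functions. As `ε L (N + 1 + K) < 1`, the term in
`|β₁ - β₂|` can be absorbed into the left-hand side.
-/

open Finset NNReal

lemma LipschitzWith.finset_sum {α ι E : Type*} [PseudoEMetricSpace α] [SeminormedAddCommGroup E]
    (s : Finset ι) {f : ι → α → E} {K : ι → ℝ≥0} (hf : ∀ i ∈ s, LipschitzWith (K i) (f i)) :
    LipschitzWith (∑ i ∈ s, K i) fun x => ∑ i ∈ s, f i x := by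
  classical
  induction s using Finset.induction_on with
  | empty => simpa using LipschitzWith.const (0 : E)
  | insert i s hi ih =>
    simp only [sum_insert hi]
    exact (hf i (mem_insert_self i s)).add (ih fun j hj => hf j (mem_insert_of_mem hj))

lemma LipschitzWith.mul_of_abs_le {α : Type*} [PseudoMetricSpace α] {f u : α → ℝ}
    {Kf Ku Mf Mu : ℝ≥0} (hf : LipschitzWith Kf f) (hu : LipschitzWith Ku u)
    (hfb : ∀ x, |f x| ≤ Mf) (hub : ∀ x, |u x| ≤ Mu) :
    LipschitzWith (Kf * Mu + Mf * Ku) fun x => f x * u x := by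
  refine LipschitzWith.of_dist_le_mul fun x y => ?_
  have hfd := hf.dist_le_mul x y
  have hud := hu.dist_le_mul x y
  rw [Real.dist_eq] at hfd hud ⊢
  calc |f x * u x - f y * u y| = |(f x - f y) * u x + f y * (u x - u y)| := by ring_nf
    _ ≤ |f x - f y| * |u x| + |f y| * |u x - u y| := by
      rw [← abs_mul, ← abs_mul]; exact abs_add_le _ _
    _ ≤ Kf * dist x y * Mu + Mf * (Ku * dist x y) := by
      exact add_le_add (mul_le_mul hfd (hub x) (abs_nonneg _) (by positivity))
        (mul_le_mul (hfb y) hud (abs_nonneg _) (by positivity))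
    _ = ↑(Kf * Mu + Mf * Ku) * dist x y := by push_cast; ring

lemma PiLp.lipschitzWith_apply {ι : Type*} [Fintype ι] (p : ENNReal) [Fact (1 ≤ p)]
    (β : ι → Type*) [∀ i, PseudoMetricSpace (β i)] (i : ι) :
    LipschitzWith 1 fun x : PiLp p β => x i :=
  LipschitzWith.of_dist_le_mul fun x y => by simpa using PiLp.dist_apply_le x y i

lemma lipschitzWith_sum_apply_mul {α ι : Type*} [PseudoMetricSpace α] [Fintype ι]
    {g : α → EuclideanSpace ℝ ι} {q : ι → α → ℝ} {L : ℝ≥0} {Ki : ι → ℝ≥0}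
    (hgb : ∀ x, ‖g x‖ ≤ L) (hglip : LipschitzWith L g)
    (hqb : ∀ i x, |q i x| ≤ 1) (hqlip : ∀ i, LipschitzWith (Ki i) (q i)) :
    LipschitzWith (L * (Fintype.card ι + ∑ i, Ki i)) fun x => ∑ i, g x i * q i x := by
  have hcoord (i : ι) : LipschitzWith L fun x => g x i := by
    have := (PiLp.lipschitzWith_apply 2 _ i).comp hglip
    rwa [one_mul] at this
  have hcoord_abs (i : ι) (x : α) : |g x i| ≤ L :=
    (PiLp.norm_apply_le (g x) i).trans (hgb x)
  have hterm := LipschitzWith.finset_sum univ fun i _ =>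
    (hcoord i).mul_of_abs_le (Mu := 1) (hqlip i) (hcoord_abs i) (by simpa using hqb i)
  refine hterm.weaken (le_of_eq ?_)
  rw [mul_add, mul_sum, sum_add_distrib]
  simp [mul_comm]

lemma abs_sum_mul_sub_sum_mul_le {ι : Type*} [Fintype ι] (v w : EuclideanSpace ℝ ι)
    (c : ι → ℝ) (hc : ∀ i, |c i| ≤ 1) :
    |∑ i, v i * c i - ∑ i, w i * c i| ≤ Fintype.card ι * ‖v - w‖ := by
  rw [← sum_sub_distrib]
  calc |∑ i, (v i * c i - w i * c i)| ≤ ∑ i, |v i * c i - w i * c i| := abs_sum_le_sum_abs _ _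
    _ ≤ ∑ _i : ι, ‖v - w‖ := sum_le_sum fun i _ => by
      rw [← sub_mul, abs_mul]
      calc |v i - w i| * |c i| ≤ ‖v - w‖ * 1 := by
            gcongr
            exacts [PiLp.norm_apply_le (v - w) i, hc i]
        _ = ‖v - w‖ := mul_one _
    _ = Fintype.card ι * ‖v - w‖ := by simp

lemma abs_sub_le_of_add_mul_eq_add_mul {F G : ℝ → ℝ} {C : ℝ≥0} {ε δ β₁ β₂ : ℝ}
    (hF : LipschitzWith C F) (hε : 0 ≤ ε) (hεC : ε * C < 1) (hFG : |F β₂ - G β₂| ≤ δ)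
    (heq : β₁ + ε * F β₁ = β₂ + ε * G β₂) :
    |β₁ - β₂| ≤ ε * δ / (1 - ε * C) := by
  have hFd : |F β₂ - F β₁| ≤ C * |β₁ - β₂| := by
    simpa [Real.dist_eq, abs_sub_comm β₂] using hF.dist_le_mul β₂ β₁
  have hsplit : β₁ - β₂ = ε * ((G β₂ - F β₂) + (F β₂ - F β₁)) := by linear_combination heq
  have hcontract : |β₁ - β₂| ≤ ε * δ + ε * C * |β₁ - β₂| := by
    calc |β₁ - β₂| = ε * |(G β₂ - F β₂) + (F β₂ - F β₁)| := by
          rw [hsplit, abs_mul, abs_of_nonneg hε]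
      _ ≤ ε * (δ + C * |β₁ - β₂|) := by
          gcongr
          exact (abs_add_le _ _).trans (add_le_add (by rwa [abs_sub_comm]) hFd)
      _ = ε * δ + ε * C * |β₁ - β₂| := by ring
  rw [le_div_iff₀ (sub_pos.2 hεC)]
  linarith

lemma mul_lt_one_of_lt_one_div {ε c : ℝ} (hc : 0 ≤ c) (hε : ε < 1 / c) : ε * c < 1 := by
  rcases hc.eq_or_lt with rfl | hc
  · simp
  · exact (lt_div_iff₀ hc).1 hε

theorem stmt6_general (N : ℕ) (L Tc ε : ℝ)
    (g h : ℝ → EuclideanSpace ℝ (Fin (N + 1)))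
    (hgb : ∀ x, ‖g x‖ ≤ L)
    (hglip : LipschitzWith (Real.toNNReal L) g)
    (hhb : ∀ x, ‖h x‖ ≤ L)
    (q : Fin (N + 1) → ℝ → ℝ) (Ki : Fin (N + 1) → NNReal)
    (hqb : ∀ i x, |q i x| ≤ 1)
    (hqlip : ∀ i, LipschitzWith (Ki i) (q i))
    (K : ℝ) (hKdef : K = ∑ i, (Ki i : ℝ))
    (hε0 : 0 < ε) (hε : ε < 1 / (L * (N + 1 + K)))
    (β₁ β₂ η : ℝ)
    (h₁ : η = β₁ + ε * (∑ i, g β₁ i * q i β₁ - Tc))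
    (h₂ : η = β₂ + ε * (∑ i, h β₂ i * q i β₂ - Tc)) :
    |β₁ - β₂| ≤ ε * (N + 1) / (1 - ε * L * (N + 1 + K)) * ⨆ x, ‖g x - h x‖ := by
  have hL : 0 ≤ L := (norm_nonneg _).trans (hgb 0)
  have hK : 0 ≤ K := hKdef ▸ sum_nonneg fun i _ => (Ki i).coe_nonneg
  have hFg := lipschitzWith_sum_apply_mul
    (fun x => (hgb x).trans (Real.le_coe_toNNReal L)) hglip hqb hqlip
  have hC : ((L.toNNReal * (Fintype.card (Fin (N + 1)) + ∑ i, Ki i) : ℝ≥0) : ℝ)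
      = L * (N + 1 + K) := by
    simp [hKdef, Real.coe_toNNReal _ hL, add_assoc]
  have hbdd : BddAbove (Set.range fun x => ‖g x - h x‖) :=
    ⟨L + L, Set.forall_mem_range.2 fun x => (norm_sub_le _ _).trans (add_le_add (hgb x) (hhb x))⟩
  have hδ : |∑ i, g β₂ i * q i β₂ - ∑ i, h β₂ i * q i β₂| ≤ (N + 1) * ⨆ x, ‖g x - h x‖ := by
    refine (abs_sum_mul_sub_sum_mul_le _ _ _ fun i => hqb i β₂).trans ?_
    simpa using mul_le_mul_of_nonneg_left (le_ciSup hbdd β₂) (by positivity : (0 : ℝ) ≤ N + 1)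
  have heq : β₁ + ε * ∑ i, g β₁ i * q i β₁ = β₂ + ε * ∑ i, h β₂ i * q i β₂ := by
    rw [h₁] at h₂; linear_combination h₂
  have hεC : ε * (L * (N + 1 + K)) < 1 := mul_lt_one_of_lt_one_div (by positivity) hε
  have hcontract := abs_sub_le_of_add_mul_eq_add_mul (G := fun β => ∑ i, h β i * q i β)
    hFg hε0.le (by rwa [hC]) hδ heq
  rw [hC] at hcontract
  calc |β₁ - β₂| ≤ ε * ((N + 1) * ⨆ x, ‖g x - h x‖) / (1 - ε * (L * (N + 1 + K))) :=
        hcontract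
    _ = _ := by ring

theorem stmt6 (N : ℕ) (L Tc ε : ℝ) (hL : 0 < L)
    (g h : ℝ → EuclideanSpace ℝ (Fin (N + 1)))
    (hgc : Continuous g) (hgb : ∀ x, ‖g x‖ ≤ L)
    (hglip : LipschitzWith (Real.toNNReal L) g)
    (hhc : Continuous h) (hhb : ∀ x, ‖h x‖ ≤ L)
    (hhlip : LipschitzWith (Real.toNNReal L) h)
    (q : Fin (N + 1) → ℝ → ℝ) (Ki : Fin (N + 1) → NNReal)
    (hqc : ∀ i, Continuous (q i)) (hqb : ∀ i x, |q i x| ≤ 1)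
    (hqlip : ∀ i, LipschitzWith (Ki i) (q i))
    (K : ℝ) (hKdef : K = ∑ i, (Ki i : ℝ))
    (hε0 : 0 < ε) (hε : ε < 1 / (L * (N + 1 + K)))
    (β₁ β₂ η : ℝ)
    (h₁ : η = β₁ + ε * (∑ i, g β₁ i * q i β₁ - Tc))
    (h₂ : η = β₂ + ε * (∑ i, h β₂ i * q i β₂ - Tc)) :
    |β₁ - β₂| ≤ ε * (N + 1) / (1 - ε * L * (N + 1 + K)) * ⨆ x, ‖g x - h x‖ :=
  stmt6_general N L Tc ε g h hgb hglip hhb q Ki hqb hqlip K hKdef hε0 hε β₁ β₂ η h₁ h₂
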